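/- arXiv:2011.07604 — 8 statements merged into one kernel-verified Lean document; each statement's English description precedes it below -/
import Mathlib

section
/- Let n ≥ 1 and τ ≥ 1 be integers, let P be an n×n row-stochastic matrix, and let π ∈ ℝⁿ satisfy π ≥ 0 entrywise, Σᵢ πᵢ = 1 and πᵀP = πᵀ (π is a stationary distribution of P). If μ ∈ ℝ satisfies μ ≤ Σ_{k=1}^{τ} F_k(i,j) for every pair of indices i,j ∈ {1,…,n}, then μ ≤ τ/n. In particular, min_{i,j} Σ_{k=1}^{τ} F_k(i,j) ≤ τ/n. -/
/-! Since `F_k(i,j) ≤ (P^k)(i,j)`, a chain started in a stationary distribution `π` visits `j`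
within `τ` steps with probability at most `τ π_j`. If every capture probability is at least `μ`,
then `μ ≤ τ π_j` for all `j`, and summing over the `n` states gives `n μ ≤ τ`. -/

/-- First-hitting-time probability matrices: `hitF P t` is `F_{t+1}`, i.e.
`F_1 = P` and `F_{k+1} = P (F_k - Diag(F_k))`. -/
def hitF {α : Type*} [Fintype α] [DecidableEq α] (P : Matrix α α ℝ) : ℕ → Matrix α α ℝ
  | 0 => P
  | k + 1 => P * (hitF P k - Matrix.diagonal fun i => hitF P k i i)

open Finset Matrix

lemma vecMul_pow_of_vecMul_eq {α R : Type*} [Fintype α] [DecidableEq α] [Semiring R]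
    {M : Matrix α α R} {v : α → R} (hv : v ᵥ* M = v) (k : ℕ) : v ᵥ* M ^ k = v := by
  induction k with
  | zero => simp
  | succ k ih => rw [pow_succ, ← vecMul_vecMul, ih, hv]

section

variable {α : Type*} [Fintype α] [DecidableEq α] {P : Matrix α α ℝ} {π : α → ℝ}

lemma hitF_succ_apply (k : ℕ) (i j : α) :
    hitF P (k + 1) i j = ∑ l ∈ univ.erase j, P i l * hitF P k l j := by
  rw [hitF, mul_apply, ← sum_erase univ (a := j) (by simp)]
  refine sum_congr rfl fun l hl => ?_
  simp [diagonal_apply_ne _ (ne_of_mem_erase hl)]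

lemma hitF_nonneg (hP : ∀ i j, 0 ≤ P i j) (t : ℕ) (i j : α) : 0 ≤ hitF P t i j := by
  induction t generalizing i with
  | zero => exact hP i j
  | succ k ih =>
    rw [hitF_succ_apply]
    exact sum_nonneg fun l _ => mul_nonneg (hP i l) (ih l)

lemma hitF_le_pow (hP : ∀ i j, 0 ≤ P i j) (t : ℕ) (i j : α) :
    hitF P t i j ≤ (P ^ (t + 1)) i j := by
  induction t generalizing i with
  | zero => simp [hitF]
  | succ k ih =>
    rw [hitF_succ_apply, pow_succ', mul_apply]
    calc ∑ l ∈ univ.erase j, P i l * hitF P k l j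
        ≤ ∑ l, P i l * hitF P k l j :=
          sum_le_sum_of_subset_of_nonneg (erase_subset _ _) fun l _ _ =>
            mul_nonneg (hP i l) (hitF_nonneg hP k l j)
      _ ≤ ∑ l, P i l * (P ^ (k + 1)) l j :=
          sum_le_sum fun l _ => mul_le_mul_of_nonneg_left (ih l) (hP i l)

lemma sum_stationary_mul_sum_hitF_le (hP : ∀ i j, 0 ≤ P i j) (hπ0 : ∀ i, 0 ≤ π i)
    (hπP : π ᵥ* P = π) (τ : ℕ) (j : α) :
    ∑ i, π i * ∑ t ∈ range τ, hitF P t i j ≤ τ * π j :=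
  calc ∑ i, π i * ∑ t ∈ range τ, hitF P t i j
      = ∑ t ∈ range τ, (π ᵥ* hitF P t) j := by
        simp only [vecMul, dotProduct, mul_sum]
        exact sum_comm
    _ ≤ ∑ t ∈ range τ, (π ᵥ* P ^ (t + 1)) j :=
        sum_le_sum fun t _ => sum_le_sum fun i _ =>
          mul_le_mul_of_nonneg_left (hitF_le_pow hP t i j) (hπ0 i)
    _ = τ * π j := by simp [vecMul_pow_of_vecMul_eq hπP]

theorem le_div_card_of_le_sum_hitF (hP : ∀ i j, 0 ≤ P i j) (hπ0 : ∀ i, 0 ≤ π i)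
    (hπ1 : ∑ i, π i = 1) (hπP : π ᵥ* P = π) {τ : ℕ} {μ : ℝ}
    (hμ : ∀ i j, μ ≤ ∑ t ∈ range τ, hitF P t i j) :
    μ ≤ τ / Fintype.card α := by
  have hμj (j : α) : μ ≤ τ * π j :=
    calc μ = ∑ i, π i * μ := by rw [← sum_mul, hπ1, one_mul]
      _ ≤ ∑ i, π i * ∑ t ∈ range τ, hitF P t i j :=
          sum_le_sum fun i _ => mul_le_mul_of_nonneg_left (hμ i j) (hπ0 i)
      _ ≤ τ * π j := sum_stationary_mul_sum_hitF_le hP hπ0 hπP τ j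
  have hcard : (0 : ℝ) < Fintype.card α := by
    have : Nonempty α := by
      by_contra h
      simp [not_nonempty_iff.mp h] at hπ1
    exact_mod_cast Fintype.card_pos
  rw [le_div_iff₀ hcard]
  calc μ * Fintype.card α = ∑ _j : α, μ := by simp [mul_comm]
    _ ≤ ∑ j, τ * π j := sum_le_sum fun j _ => hμj j
    _ = τ := by rw [← mul_sum, hπ1, mul_one]

end

theorem stmt_0_general (n τ : ℕ) (hn : 1 ≤ n)
    (P : Matrix (Fin n) (Fin n) ℝ)
    (hP0 : ∀ i j, 0 ≤ P i j)
    (π : Fin n → ℝ) (hπ0 : ∀ i, 0 ≤ π i) (hπ1 : ∑ i, π i = 1)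
    (hπP : ∀ j, ∑ i, π i * P i j = π j)
    (μ : ℝ) (hμ : ∀ i j : Fin n, μ ≤ ∑ t ∈ Finset.range τ, hitF P t i j) :
    μ ≤ (τ : ℝ) / n ∧
      Finset.univ.inf' ⟨((⟨0, hn⟩ : Fin n), (⟨0, hn⟩ : Fin n)), Finset.mem_univ _⟩
        (fun p : Fin n × Fin n => ∑ t ∈ Finset.range τ, hitF P t p.1 p.2) ≤ (τ : ℝ) / n := by
  have bound (ν : ℝ) (hν : ∀ i j : Fin n, ν ≤ ∑ t ∈ range τ, hitF P t i j) : ν ≤ τ / n := by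
    simpa using le_div_card_of_le_sum_hitF hP0 hπ0 hπ1 (funext hπP) hν
  exact ⟨bound μ hμ, bound _ fun i j => Finset.inf'_le _ (Finset.mem_univ (i, j))⟩

/-- Universal upper bound for the value of the game: if `μ` lower bounds all capture
probabilities `ℙ(T_ij ≤ τ)`, then `μ ≤ τ/n`; in particular the minimum capture
probability is at most `τ/n`. -/
theorem stmt_0 (n τ : ℕ) (hn : 1 ≤ n) (hτ : 1 ≤ τ)
    (P : Matrix (Fin n) (Fin n) ℝ)
    (hP0 : ∀ i j, 0 ≤ P i j) (hP1 : ∀ i, ∑ j, P i j = 1)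
    (π : Fin n → ℝ) (hπ0 : ∀ i, 0 ≤ π i) (hπ1 : ∑ i, π i = 1)
    (hπP : ∀ j, ∑ i, π i * P i j = π j)
    (μ : ℝ) (hμ : ∀ i j : Fin n, μ ≤ ∑ t ∈ Finset.range τ, hitF P t i j) :
    μ ≤ (τ : ℝ) / n ∧
      Finset.univ.inf' ⟨((⟨0, hn⟩ : Fin n), (⟨0, hn⟩ : Fin n)), Finset.mem_univ _⟩
        (fun p : Fin n × Fin n => ∑ t ∈ Finset.range τ, hitF P t p.1 p.2) ≤ (τ : ℝ) / n :=
  stmt_0_general n τ hn P hP0 π hπ0 hπ1 hπP μ hμ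
end

section
/- Let τ ≥ 1 and m ≥ 1 be integers, set n = τ·m, and let σ be a cyclic permutation of {1,…,τ} (a single τ-cycle). Define the n×n matrix P, with states indexed by pairs (a,u) ∈ {1,…,τ}×{1,…,m}, by P((a,u),(b,v)) = 1/m if b = σ(a) and P((a,u),(b,v)) = 0 otherwise (equivalently, P = Π₀ ⊗ (τ/n)·𝟙𝟙ᵀ where Π₀ is the permutation matrix of σ). Then P is row-stochastic and for every pair of states x, y one has Σ_{k=1}^{τ} F_k(x,y) = τ/n; in particular the minimum capture probability min_{x,y} ℙ(T_xy ≤ τ) equals τ/n, attaining the universal upper bound. -/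
/-!
The matrix moves the block coordinate along `σ` and draws the coordinate inside the block
uniformly, so `P ^ k (x, y) = [y.1 = σ ^ k x.1] / m`. As `σ` is a single `τ`-cycle, no block is
revisited before time `τ`; hence the diagonals of `F_1, …, F_{τ-1}` vanish and `F_k = P ^ k` for
`k ≤ τ`. For `k = 1, …, τ` the block `σ ^ k x.1` runs through every block exactly once, so the
capture probability is `1 / m = τ / n`.
-/

open Finset

namespace Equiv.Perm

variable {α : Type*} [Fintype α] {σ : Perm α} {a : α}

lemma card_le_of_pow_apply_eq_self (hσ : ∀ b, ∃ k : ℕ, (σ ^ k) a = b) {j : ℕ} (hj : 0 < j)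
    (hfix : (σ ^ j) a = a) : Fintype.card α ≤ j := by
  classical
  -- a return time `j` already enumerates the orbit as `k ↦ σ ^ (k % j) a`
  have hcover : (univ : Finset α) ⊆ (range j).image fun k => (σ ^ k) a := by
    intro b _
    obtain ⟨k, rfl⟩ := hσ b
    refine mem_image.2 ⟨k % j, mem_range.2 (Nat.mod_lt _ hj), ?_⟩
    conv_rhs => rw [← Nat.mod_add_div k j, pow_add, pow_mul, mul_apply,
      pow_apply_eq_self_of_apply_eq_self hfix]
  calc Fintype.card α = #(univ : Finset α) := card_univ.symm
    _ ≤ #((range j).image fun k => (σ ^ k) a) := card_le_card hcover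
    _ ≤ j := card_image_le.trans (card_range j).le

lemma bijective_pow_succ_apply (hσ : ∀ b, ∃ k : ℕ, (σ ^ k) a = b) :
    Function.Bijective fun t : Fin (Fintype.card α) => (σ ^ (t.val + 1)) a := by
  refine (Fintype.bijective_iff_injective_and_card _).2 ⟨?_, Fintype.card_fin _⟩
  suffices ∀ s t : Fin (Fintype.card α), s < t → (σ ^ (s.val + 1)) a ≠ (σ ^ (t.val + 1)) a by
    intro s t hst
    by_contra hne
    rcases lt_or_gt_of_ne hne with h | h
    exacts [this s t h hst, this t s h hst.symm]
  intro s t hst heq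
  have hfix : (σ ^ (t.val - s.val)) a = a := by
    apply (σ ^ (s.val + 1)).injective
    rw [← mul_apply, ← pow_add, heq]
    congr 2
    omega
  have := card_le_of_pow_apply_eq_self hσ (Nat.sub_pos_of_lt hst) hfix
  omega

lemma sum_range_card_pow_succ_apply {M : Type*} [AddCommMonoid M]
    (hσ : ∀ b, ∃ k : ℕ, (σ ^ k) a = b) (g : α → M) :
    ∑ t ∈ range (Fintype.card α), g ((σ ^ (t + 1)) a) = ∑ b, g b := by
  rw [sum_range fun t => g ((σ ^ (t + 1)) a)]
  exact Fintype.sum_bijective _ (bijective_pow_succ_apply hσ) _ _ fun _ => rfl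

end Equiv.Perm

lemma hitF_eq_pow_succ {α : Type*} [Fintype α] [DecidableEq α] (P : Matrix α α ℝ) {t : ℕ}
    (hdiag : ∀ s < t, ∀ i, (P ^ (s + 1)) i i = 0) : hitF P t = P ^ (t + 1) := by
  induction t with
  | zero => simp [hitF]
  | succ t ih =>
    have ih := ih fun s hs => hdiag s (Nat.lt_succ_of_lt hs)
    have hzero : (Matrix.diagonal fun i => hitF P t i i) = 0 := by
      simp [ih, hdiag t (Nat.lt_succ_self t)]
    rw [hitF, hzero, sub_zero, ih, ← pow_succ']

section fiberwiseUniform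

variable {ι : Type*} (κ : Type*) [DecidableEq ι] [Fintype κ]

noncomputable def fiberwiseUniform (f : ι → ι) : Matrix (ι × κ) (ι × κ) ℝ :=
  fun x y => if y.1 = f x.1 then 1 / (Fintype.card κ : ℝ) else 0

variable {κ}

lemma fiberwiseUniform_nonneg (f : ι → ι) (x y : ι × κ) : 0 ≤ fiberwiseUniform κ f x y := by
  unfold fiberwiseUniform
  split_ifs <;> positivity

variable [Fintype ι] [Nonempty κ]

lemma sum_fiberwiseUniform_apply (f : ι → ι) (x : ι × κ) :
    ∑ y, fiberwiseUniform κ f x y = 1 := by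
  rw [Fintype.sum_prod_type, sum_comm]
  simp [fiberwiseUniform]

lemma fiberwiseUniform_mul (f g : ι → ι) :
    fiberwiseUniform κ f * fiberwiseUniform κ g = fiberwiseUniform κ (g ∘ f) := by
  ext x y
  rw [Matrix.mul_apply, Fintype.sum_prod_type, sum_comm]
  simp only [fiberwiseUniform, one_div, sum_const, card_univ, nsmul_eq_mul, Function.comp_apply]
  rw [sum_eq_single (f x.1) (fun b _ hb => by simp [hb]) (by simp), if_pos rfl]
  split_ifs <;> field_simp

lemma fiberwiseUniform_pow_succ [DecidableEq κ] (f : ι → ι) (k : ℕ) :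
    fiberwiseUniform κ f ^ (k + 1) = fiberwiseUniform κ f^[k + 1] := by
  induction k with
  | zero => simp
  | succ k ih => rw [pow_succ', ih, fiberwiseUniform_mul, ← Function.iterate_succ]

end fiberwiseUniform

theorem stmt_2_general (τ m : ℕ)
    (σ : Equiv.Perm (Fin τ)) (hσ : ∀ a b : Fin τ, ∃ k : ℕ, (σ ^ k) a = b)
    (P : Matrix (Fin τ × Fin m) (Fin τ × Fin m) ℝ)
    (hP : ∀ x y : Fin τ × Fin m, P x y = if y.1 = σ x.1 then (1 : ℝ) / m else 0) :
    (∀ x y, 0 ≤ P x y) ∧ (∀ x, ∑ y, P x y = 1) ∧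
    (∀ x y : Fin τ × Fin m,
      ∑ t ∈ Finset.range τ, hitF P t x y = (τ : ℝ) / (τ * m)) := by
  obtain rfl : P = fiberwiseUniform (Fin m) σ := by
    ext x y
    simp [hP, fiberwiseUniform]
  refine ⟨fiberwiseUniform_nonneg σ, fun x => ?_, fun x y => ?_⟩
  · have : Nonempty (Fin m) := ⟨x.2⟩
    exact sum_fiberwiseUniform_apply σ x
  have : Nonempty (Fin m) := ⟨x.2⟩
  have hpow (t : ℕ) :
      fiberwiseUniform (Fin m) σ ^ (t + 1) = fiberwiseUniform (Fin m) ⇑(σ ^ (t + 1)) := by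
    rw [fiberwiseUniform_pow_succ, Equiv.Perm.iterate_eq_pow]
  have hhit (t : ℕ) (ht : t < τ) :
      hitF (fiberwiseUniform (Fin m) σ) t = fiberwiseUniform (Fin m) ⇑(σ ^ (t + 1)) := by
    refine (hitF_eq_pow_succ _ fun s hs i => ?_).trans (hpow t)
    have hτ := Equiv.Perm.card_le_of_pow_apply_eq_self (hσ i.1) (Nat.succ_pos s)
    rw [Fintype.card_fin] at hτ
    rw [hpow, fiberwiseUniform, if_neg fun h => absurd (hτ h.symm) (by omega)]
  have hsum := Equiv.Perm.sum_range_card_pow_succ_apply (hσ x.1)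
    fun b => if y.1 = b then (1 : ℝ) / m else 0
  rw [Fintype.card_fin] at hsum
  calc ∑ t ∈ range τ, hitF (fiberwiseUniform (Fin m) σ) t x y
      = ∑ t ∈ range τ, if y.1 = (σ ^ (t + 1)) x.1 then (1 : ℝ) / m else 0 := by
        refine sum_congr rfl fun t ht => ?_
        rw [hhit t (mem_range.1 ht), fiberwiseUniform, Fintype.card_fin]
    _ = 1 / m := by simpa using hsum
    _ = τ / (τ * m) := by
        have hτ : (τ : ℝ) ≠ 0 := Nat.cast_ne_zero.2 (Fin.pos x.1).ne'
        field_simp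

/-- Optimal strategy in the complete graph when `τ` divides `n = τ·m`:
`P = Π₀ ⊗ (τ/n)·𝟙𝟙ᵀ` (with `Π₀` the permutation matrix of a single `τ`-cycle `σ`)
is row-stochastic and every capture probability `ℙ(T_xy ≤ τ)` equals `τ/n`. -/
theorem stmt_2 (τ m : ℕ) (hτ : 1 ≤ τ) (hm : 1 ≤ m)
    (σ : Equiv.Perm (Fin τ)) (hσ : ∀ a b : Fin τ, ∃ k : ℕ, (σ ^ k) a = b)
    (P : Matrix (Fin τ × Fin m) (Fin τ × Fin m) ℝ)
    (hP : ∀ x y : Fin τ × Fin m, P x y = if y.1 = σ x.1 then (1 : ℝ) / m else 0) :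
    (∀ x y, 0 ≤ P x y) ∧ (∀ x, ∑ y, P x y = 1) ∧
    (∀ x y : Fin τ × Fin m,
      ∑ t ∈ Finset.range τ, hitF P t x y = (τ : ℝ) / (τ * m)) :=
  stmt_2_general τ m σ hσ P hP
end

section
/- For all integers n ≥ 3 and all integers τ with 1 ≤ τ ≤ n − 1, one has (n^τ − (n−1)^τ)/(τ · n^{τ−1}) ≥ 1 − 1/e, where e is Euler's number. (This is the suboptimality factor of the complete-graph random walk: the ratio of its capture probability 1 − (1 − 1/n)^τ to the upper bound τ/n.) -/
/-!
Dividing numerator and denominator by `n ^ τ`, the ratio is `(1 - (1 - 1/n) ^ τ) / x` with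
`x = τ / n ∈ (0, 1]`. Since `1 - 1/n ≤ exp (-1/n)`, the numerator is at least `1 - exp (-x)`, and
by convexity `exp (-x)` lies below its secant `1 - (1 - e⁻¹) x` on `[0, 1]`.
-/

open Real

lemma exp_neg_le_one_sub_mul {x : ℝ} (hx0 : 0 ≤ x) (hx1 : x ≤ 1) :
    exp (-x) ≤ 1 - (1 - exp (-1)) * x := by
  have h := convexOn_exp.2 (Set.mem_univ 0) (Set.mem_univ (-1)) (by linarith : 0 ≤ 1 - x) hx0
    (by ring)
  simp only [smul_eq_mul, mul_zero, zero_add, mul_neg, mul_one, exp_zero] at h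
  linarith

lemma one_sub_inv_pow_le_exp_neg {n : ℝ} (hn : 1 ≤ n) (τ : ℕ) :
    (1 - 1 / n) ^ τ ≤ exp (-(τ / n)) := by
  have hbase : 1 - 1 / n ≤ exp (-(1 / n)) := by linarith [add_one_le_exp (-(1 / n))]
  have hnonneg : 0 ≤ 1 - 1 / n := by
    rw [sub_nonneg]; exact div_le_one_of_le₀ hn (by linarith)
  calc (1 - 1 / n) ^ τ ≤ exp (-(1 / n)) ^ τ := pow_le_pow_left₀ hnonneg hbase τ
    _ = exp (-(τ / n)) := by rw [← exp_nat_mul]; ring_nf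

lemma mul_div_le_one_sub_one_sub_inv_pow {n : ℝ} {τ : ℕ} (hτn : (τ : ℝ) ≤ n) (hn : 1 ≤ n) :
    (1 - exp (-1)) * (τ / n) ≤ 1 - (1 - 1 / n) ^ τ := by
  have hx0 : 0 ≤ τ / n := by positivity
  have hx1 : τ / n ≤ 1 := div_le_one_of_le₀ hτn (by linarith)
  linarith [one_sub_inv_pow_le_exp_neg hn τ, exp_neg_le_one_sub_mul hx0 hx1]

lemma pow_sub_sub_one_pow_div_eq {n : ℝ} (hn : n ≠ 0) {τ : ℕ} (hτ : 1 ≤ τ) :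
    (n ^ τ - (n - 1) ^ τ) / (τ * n ^ (τ - 1)) = (1 - (1 - 1 / n) ^ τ) / (τ / n) := by
  obtain ⟨k, rfl⟩ := Nat.exists_eq_add_of_le' hτ
  simp only [Nat.add_sub_cancel, one_sub_div hn, div_pow]
  field_simp
  ring

theorem stmt_4_general (n τ : ℕ) (hτ1 : 1 ≤ τ) (hτ2 : τ ≤ n - 1) :
    1 - 1 / Real.exp 1 ≤
      ((n : ℝ) ^ τ - ((n : ℝ) - 1) ^ τ) / ((τ : ℝ) * (n : ℝ) ^ (τ - 1)) := by
  have hn : (1 : ℝ) ≤ n := by exact_mod_cast (by omega : 1 ≤ n)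
  have hτn : (τ : ℝ) ≤ n := by exact_mod_cast (by omega : τ ≤ n)
  have hx : 0 < (τ : ℝ) / n := by
    have : (0 : ℝ) < τ := by exact_mod_cast hτ1
    positivity
  rw [pow_sub_sub_one_pow_div_eq (by positivity) hτ1, le_div_iff₀ hx, one_div, ← exp_neg]
  exact mul_div_le_one_sub_one_sub_inv_pow hτn hn

/-- Constant factor optimality of the complete-graph random walk: for integers
`n ≥ 3` and `1 ≤ τ ≤ n - 1`, `(n^τ - (n-1)^τ)/(τ·n^{τ-1}) ≥ 1 - 1/e`. -/
theorem stmt_4 (n τ : ℕ) (hn : 3 ≤ n) (hτ1 : 1 ≤ τ) (hτ2 : τ ≤ n - 1) :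
    1 - 1 / Real.exp 1 ≤
      ((n : ℝ) ^ τ - ((n : ℝ) - 1) ^ τ) / ((τ : ℝ) * (n : ℝ) ^ (τ - 1)) :=
  stmt_4_general n τ hτ1 hτ2
end

section
/- Fix an integer n ≥ 3 and define g(τ) = (n^τ − (n−1)^τ)/(τ · n^{τ−1}) for real τ > 0. Then g is nonincreasing: for all real numbers 0 < τ₁ ≤ τ₂ one has g(τ₂) ≤ g(τ₁). -/
open Set

/- With `r = (n - 1)/n`, the ratio equals `n (1 - r^τ)/τ`, that is `-n` times the slope of the
secant of the convex function `τ ↦ r^τ` between `0` and `τ`; such slopes increase with `τ`. -/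

theorem one_sub_rpow_div_antitoneOn {b : ℝ} (hb : 0 < b) :
    AntitoneOn (fun τ : ℝ => (1 - b ^ τ) / τ) (Ioi 0) := by
  intro τ₁ h1 τ₂ h2 h12
  dsimp only
  have hslope := (convexOn_rpow_left hb).secant_mono (a := 0) trivial trivial trivial
    (ne_of_gt h1) (ne_of_gt h2) h12
  simp only [Real.rpow_zero, sub_zero] at hslope
  rw [← neg_sub, neg_div, ← neg_sub (b ^ τ₁), neg_div]
  exact neg_le_neg hslope

theorem rpow_sub_rpow_div_eq {x y : ℝ} (hx : 0 < x) (hy : 0 ≤ y) {τ : ℝ} (hτ : τ ≠ 0) :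
    (x ^ τ - y ^ τ) / (τ * x ^ (τ - 1)) = x * ((1 - (y / x) ^ τ) / τ) := by
  rw [Real.div_rpow hy hx.le, Real.rpow_sub hx, Real.rpow_one]
  field_simp

theorem rpow_sub_rpow_div_antitoneOn {x y : ℝ} (hx : 0 < x) (hy : 0 < y) :
    AntitoneOn (fun τ : ℝ => (x ^ τ - y ^ τ) / (τ * x ^ (τ - 1))) (Ioi 0) := by
  intro τ₁ h1 τ₂ h2 h12
  dsimp only
  rw [rpow_sub_rpow_div_eq hx hy.le (ne_of_gt h1), rpow_sub_rpow_div_eq hx hy.le (ne_of_gt h2)]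
  exact mul_le_mul_of_nonneg_left
    (one_sub_rpow_div_antitoneOn (div_pos hy hx) h1 h2 h12) hx.le

/-- For a fixed integer `n ≥ 3`, the function
`g(τ) = (n^τ - (n-1)^τ)/(τ·n^{τ-1})` (real powers) is nonincreasing on `(0, ∞)`. -/
theorem stmt_5 (n : ℕ) (hn : 3 ≤ n) (τ₁ τ₂ : ℝ) (h1 : 0 < τ₁) (h12 : τ₁ ≤ τ₂) :
    ((n : ℝ) ^ τ₂ - ((n : ℝ) - 1) ^ τ₂) / (τ₂ * (n : ℝ) ^ (τ₂ - 1)) ≤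
      ((n : ℝ) ^ τ₁ - ((n : ℝ) - 1) ^ τ₁) / (τ₁ * (n : ℝ) ^ (τ₁ - 1)) := by
  have hn' : (3 : ℝ) ≤ n := by exact_mod_cast hn
  exact rpow_sub_rpow_div_antitoneOn (by linarith) (by linarith) h1 (h1.trans_le h12) h12
end

section
/- Define h(n) = n/(n−1) − (1 − 1/n)^{n−2} for integers n ≥ 3. Then h is nonincreasing, i.e., h(n₂) ≤ h(n₁) for all integers 3 ≤ n₁ ≤ n₂, and moreover h(n) ≥ 1 − 1/e for every integer n ≥ 3, where e is Euler's number. -/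
/-!
With `a = 1 - 1/n`, the step `h (n+1) ≤ h n` says `a^(n-2) - (1 - 1/(n+1))^(n-1) ≤ 1/(n(n-1))`.
Since `1 - 1/(n+1) = a (1 + 1/(n²-1))`, Bernoulli's inequality bounds the left side by
`a^(n-2) (2n-1) / ((n+1)²(n-1))`, and `a^(n-2) ≤ e^{-(n-2)/n} ≤ n/(2n-2)` finishes it.
The lower bound then holds because `h` decreases to its limit `1 - 1/e`, as `(1 - 1/n)^n → 1/e`.
-/

open Real Filter Topology

lemma one_sub_inv_pow_le_div_add {x : ℝ} (hx : 1 ≤ x) (k : ℕ) :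
    (1 - 1 / x) ^ k ≤ x / (x + k) := by
  have hx0 : 0 < x := by linarith
  calc (1 - 1 / x) ^ k ≤ rexp (-(1 / x)) ^ k := by
        gcongr
        · rw [sub_nonneg, div_le_one hx0]; exact hx
        · exact one_sub_le_exp_neg _
    _ = 1 / rexp (k / x) := by rw [← exp_nat_mul, one_div (rexp _), ← exp_neg]; congr 1; ring
    _ ≤ 1 / (k / x + 1) := one_div_le_one_div_of_le (by positivity) (add_one_le_exp _)
    _ = x / (x + k) := by field_simp; ring

lemma one_sub_inv_pow_mul_le {x : ℝ} (hx : 1 < x) (k : ℕ) :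
    (1 - 1 / x) ^ k * (1 + k / (x ^ 2 - 1)) ≤ (1 - 1 / (x + 1)) ^ k := by
  have hx0 : 0 < x := by linarith
  have hsq : 0 < x ^ 2 - 1 := by nlinarith
  have hε : 0 ≤ 1 / (x ^ 2 - 1) := by positivity
  have hfactor : 1 - 1 / (x + 1) = (1 - 1 / x) * (1 + 1 / (x ^ 2 - 1)) := by
    field_simp [hsq.ne']; ring
  have bernoulli := one_add_mul_le_pow (a := 1 / (x ^ 2 - 1)) (by linarith) k
  rw [hfactor, mul_pow, ← mul_one_div (k : ℝ)]
  gcongr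
  exact pow_nonneg (by rw [sub_nonneg, div_le_one hx0]; exact hx.le) k

noncomputable def h (n : ℕ) : ℝ := (n : ℝ) / ((n : ℝ) - 1) - (1 - 1 / (n : ℝ)) ^ (n - 2)

lemma h_succ_le {n : ℕ} (hn : 3 ≤ n) : h (n + 1) ≤ h n := by
  obtain ⟨k, rfl⟩ : ∃ k, n = k + 2 := ⟨n - 2, by omega⟩
  set x : ℝ := k + 2 with hxk
  have hx : 3 ≤ x := by rw [hxk]; exact_mod_cast hn
  have hx1 : 0 < x - 1 := by linarith
  have hsq : 0 < x ^ 2 - 1 := by nlinarith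
  have hcast : ((k + 2 : ℕ) : ℝ) = x := by push_cast; rfl
  have hcast' : ((k + 2 + 1 : ℕ) : ℝ) = x + 1 := by push_cast; rfl
  rw [h, h, hcast, hcast', show k + 2 + 1 - 2 = k + 1 by omega, Nat.add_sub_cancel, pow_succ,
    add_sub_cancel_right]
  set A := (1 - 1 / x) ^ k
  set B := (1 - 1 / (x + 1)) ^ k
  have hAB : A * (x ^ 2 + x - 3) ≤ B * (x ^ 2 - 1) := by
    have := one_sub_inv_pow_mul_le (by linarith : 1 < x) k
    rw [show (k : ℝ) = x - 2 by rw [hxk]; ring,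
      show 1 + (x - 2) / (x ^ 2 - 1) = (x ^ 2 + x - 3) / (x ^ 2 - 1) by field_simp; ring,
      ← mul_div_assoc, div_le_iff₀ hsq] at this
    exact this
  have hA_le : A * (x * (2 * x - 1)) ≤ (x + 1) ^ 2 := by
    have := one_sub_inv_pow_le_div_add (by linarith : 1 ≤ x) k
    rw [show x + k = 2 * (x - 1) by rw [hxk]; ring, le_div_iff₀ (by positivity)] at this
    nlinarith [mul_le_mul_of_nonneg_left this (by nlinarith : 0 ≤ x * (2 * x - 1))]
  have key : A * x * (x ^ 2 - 1) * (x + 1) - B * x ^ 2 * (x ^ 2 - 1) ≤ (x + 1) ^ 2 := by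
    nlinarith [mul_le_mul_of_nonneg_left hAB (sq_nonneg x)]
  have hdiff : x / (x - 1) - A - ((x + 1) / x - B * (1 - 1 / (x + 1))) =
      ((x + 1) ^ 2 - (A * x * (x ^ 2 - 1) * (x + 1) - B * x ^ 2 * (x ^ 2 - 1))) /
        (x * (x - 1) * (x + 1) ^ 2) := by
    have hx0 : x ≠ 0 := by positivity
    field_simp [hx1.ne']
    ring
  rw [← sub_nonneg, hdiff]
  exact div_nonneg (by linarith) (by positivity)

lemma tendsto_h : Tendsto h atTop (𝓝 (1 - 1 / rexp 1)) := by
  have hpow : Tendsto (fun n : ℕ ↦ (1 + (-1) / (n : ℝ)) ^ n / (1 - 1 / (n : ℝ)) ^ 2) atTop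
      (𝓝 (rexp (-1) / (1 - 0) ^ 2)) :=
    (tendsto_one_add_div_pow_exp (-1)).div
      ((tendsto_const_nhds.sub tendsto_one_div_atTop_nhds_zero_nat).pow 2) (by norm_num)
  have hlim := (tendsto_natCast_div_add_atTop (-1 : ℝ)).sub hpow
  rw [sub_zero, one_pow, div_one, exp_neg, ← one_div] at hlim
  refine hlim.congr' ?_
  filter_upwards [eventually_ge_atTop 2] with n hn
  obtain ⟨k, rfl⟩ : ∃ k, n = k + 2 := ⟨n - 2, by omega⟩
  have hne : (1 : ℝ) - 1 / ((k + 2 : ℕ) : ℝ) ≠ 0 := by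
    refine (sub_pos.2 ?_).ne'
    rw [div_lt_one (by positivity)]
    push_cast
    linarith
  rw [h, Nat.add_sub_cancel, ← sub_eq_add_neg, neg_div, ← sub_eq_add_neg, pow_add,
    mul_div_cancel_right₀ _ (pow_ne_zero 2 hne)]

/-- `h(n) = n/(n-1) - (1 - 1/n)^{n-2}` is nonincreasing on integers `n ≥ 3`,
and `h(n) ≥ 1 - 1/e` for every integer `n ≥ 3`. -/
theorem stmt_6 :
    (∀ n₁ n₂ : ℕ, 3 ≤ n₁ → n₁ ≤ n₂ →
      (n₂ : ℝ) / ((n₂ : ℝ) - 1) - (1 - 1 / (n₂ : ℝ)) ^ (n₂ - 2) ≤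
        (n₁ : ℝ) / ((n₁ : ℝ) - 1) - (1 - 1 / (n₁ : ℝ)) ^ (n₁ - 2)) ∧
    (∀ n : ℕ, 3 ≤ n →
      1 - 1 / Real.exp 1 ≤ (n : ℝ) / ((n : ℝ) - 1) - (1 - 1 / (n : ℝ)) ^ (n - 2)) := by
  have hanti : AntitoneOn h (Set.Ici 3) := antitoneOn_nat_Ici_of_succ_le fun _ hn ↦ h_succ_le hn
  refine ⟨fun n₁ n₂ h₁ h₁₂ ↦ hanti h₁ (h₁.trans h₁₂) h₁₂, fun n hn ↦ ?_⟩
  exact le_of_tendsto tendsto_h ((eventually_ge_atTop n).mono fun m hm ↦ hanti hn (hn.trans hm) hm)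
end

section
/- Let P be an n×n row-stochastic matrix and let i, j, k ∈ {1,…,n} be pairwise distinct. Suppose every directed walk from k to j in the transition digraph of P passes through i, i.e., for every finite sequence v_0 = k, v_1, …, v_m = j (m ≥ 1) with P(v_{t}, v_{t+1}) > 0 for all 0 ≤ t < m, there exists some t with v_t = i. Then for every τ ≥ 1, Σ_{t=1}^{τ} F_t(k,j) ≤ Σ_{t=1}^{τ−1} F_t(i,j); in particular ℙ(T_kj ≤ τ) ≤ ℙ(T_ij ≤ τ). -/
open Finset

def Separates {α : Type*} (P : Matrix α α ℝ) (i a j : α) : Prop :=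
  ∀ m : ℕ, 1 ≤ m → ∀ v : ℕ → α, v 0 = a → v m = j →
    (∀ t < m, 0 < P (v t) (v (t + 1))) → ∃ t ≤ m, v t = i

section Separates

variable {α : Type*} {P : Matrix α α ℝ} {i a b j : α}

lemma Separates.apply_eq_zero (hP0 : ∀ a b, 0 ≤ P a b) (h : Separates P i a j)
    (hai : a ≠ i) (hij : i ≠ j) : P a j = 0 := by
  refine le_antisymm (not_lt.1 fun hpos => ?_) (hP0 a j)
  obtain ⟨t, ht, hti⟩ := h 1 le_rfl (fun t => if t = 0 then a else j) rfl rfl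
    (fun t ht => by simpa [Nat.lt_one_iff.1 ht] using hpos)
  interval_cases t
  · exact hai hti
  · exact hij hti.symm

lemma Separates.of_apply_pos (h : Separates P i a j) (hai : a ≠ i)
    (hab : 0 < P a b) : Separates P i b j := by
  intro m hm v hv0 hvm hv
  let w : ℕ → α := fun t => if t = 0 then a else v (t - 1)
  have hw : ∀ t < m + 1, 0 < P (w t) (w (t + 1))
    | 0, _ => by simpa [w, hv0] using hab
    | s + 1, hs => by simpa [w] using hv s (by omega)
  obtain ⟨t, ht, hti⟩ := h (m + 1) (by omega) w rfl (by simp [w, hvm]) hw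
  rcases t with _ | s
  · exact absurd hti hai
  · exact ⟨s, by omega, hti⟩

end Separates

variable {α : Type*} [Fintype α] [DecidableEq α] (P : Matrix α α ℝ)

lemma hitF_succ_apply_s7 (t : ℕ) (a b : α) :
    hitF P (t + 1) a b = ∑ c, P a c * if c = b then 0 else hitF P t c b := by
  simp only [hitF, Matrix.mul_apply, Matrix.sub_apply, Matrix.diagonal_apply]
  refine sum_congr rfl fun c _ => ?_
  split_ifs with h <;> simp [h]

lemma hitF_nonneg_s7 (hP0 : ∀ a b, 0 ≤ P a b) (t : ℕ) (a b : α) : 0 ≤ hitF P t a b := by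
  induction t generalizing a with
  | zero => exact hP0 a b
  | succ t ih =>
    rw [hitF_succ_apply_s7]
    exact sum_nonneg fun c _ => mul_nonneg (hP0 a c) (by split_ifs <;> simp [ih])

/-- `captureProb P τ a j = ℙ(T_aj ≤ τ)`. -/
def captureProb (τ : ℕ) (a j : α) : ℝ :=
  ∑ t ∈ range τ, hitF P t a j

lemma captureProb_le_succ (hP0 : ∀ a b, 0 ≤ P a b) (τ : ℕ) (a j : α) :
    captureProb P τ a j ≤ captureProb P (τ + 1) a j := by
  rw [captureProb, captureProb, sum_range_succ]
  exact le_add_of_nonneg_right (hitF_nonneg_s7 P hP0 τ a j)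

lemma captureProb_succ (τ : ℕ) (a j : α) :
    captureProb P (τ + 1) a j =
      P a j + ∑ b, P a b * if b = j then 0 else captureProb P τ b j := by
  rw [captureProb, sum_range_succ', add_comm]
  simp only [hitF_succ_apply_s7, captureProb, mul_ite, mul_zero, mul_sum]
  rw [sum_comm]
  exact congrArg₂ _ rfl (sum_congr rfl fun b _ => by split_ifs <;> simp)

variable {P} in
theorem captureProb_succ_le_of_separates (hP0 : ∀ a b, 0 ≤ P a b)
    (hP1 : ∀ a, ∑ b, P a b = 1) {i j a : α} (hij : i ≠ j) (hai : a ≠ i)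
    (h : Separates P i a j) (τ : ℕ) : captureProb P (τ + 1) a j ≤ captureProb P τ i j := by
  induction τ generalizing a with
  | zero =>
    simp [captureProb, hitF, h.apply_eq_zero hP0 hai hij]
  | succ τ ih =>
    have hGi : 0 ≤ captureProb P (τ + 1) i j := sum_nonneg fun t _ => hitF_nonneg_s7 P hP0 t i j
    have hterm : ∀ b, (P a b * if b = j then 0 else captureProb P (τ + 1) b j) ≤
        P a b * captureProb P (τ + 1) i j := by
      intro b
      rcases (hP0 a b).eq_or_lt with hab | hab
      · simp [← hab]
      refine mul_le_mul_of_nonneg_left ?_ hab.le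
      split_ifs with hbj
      · exact hGi
      rcases eq_or_ne b i with rfl | hbi
      · rfl
      exact (ih hbi (h.of_apply_pos hai hab)).trans (captureProb_le_succ P hP0 τ i j)
    calc captureProb P (τ + 1 + 1) a j
        = ∑ b, P a b * if b = j then 0 else captureProb P (τ + 1) b j := by
          rw [captureProb_succ, h.apply_eq_zero hP0 hai hij, zero_add]
      _ ≤ ∑ b, P a b * captureProb P (τ + 1) i j := sum_le_sum fun b _ => hterm b
      _ = captureProb P (τ + 1) i j := by rw [← sum_mul, hP1 a, one_mul]

theorem stmt_7_general (n : ℕ) (P : Matrix (Fin n) (Fin n) ℝ)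
    (hP0 : ∀ a b, 0 ≤ P a b) (hP1 : ∀ a, ∑ b, P a b = 1)
    (i j k : Fin n) (hij : i ≠ j) (hik : i ≠ k)
    (hwalk : ∀ m : ℕ, 1 ≤ m → ∀ v : ℕ → Fin n, v 0 = k → v m = j →
      (∀ t < m, 0 < P (v t) (v (t + 1))) → ∃ t ≤ m, v t = i)
    (τ : ℕ) :
    (∑ t ∈ Finset.range τ, hitF P t k j ≤ ∑ t ∈ Finset.range (τ - 1), hitF P t i j) ∧
    (∑ t ∈ Finset.range τ, hitF P t k j ≤ ∑ t ∈ Finset.range τ, hitF P t i j) := by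
  rcases τ with _ | s
  · simp
  · have hk : captureProb P (s + 1) k j ≤ captureProb P s i j :=
      captureProb_succ_le_of_separates hP0 hP1 hij hik.symm hwalk s
    exact ⟨hk, hk.trans (captureProb_le_succ P hP0 s i j)⟩

/-- Dominated strategy for the intruder, case (i): if every directed walk from `k` to `j`
in the transition digraph of the row-stochastic matrix `P` passes through `i`, then
`Σ_{t=1}^{τ} F_t(k,j) ≤ Σ_{t=1}^{τ-1} F_t(i,j)`; in particular
`ℙ(T_kj ≤ τ) ≤ ℙ(T_ij ≤ τ)`. -/
theorem stmt_7 (n : ℕ) (P : Matrix (Fin n) (Fin n) ℝ)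
    (hP0 : ∀ a b, 0 ≤ P a b) (hP1 : ∀ a, ∑ b, P a b = 1)
    (i j k : Fin n) (hij : i ≠ j) (hik : i ≠ k) (hjk : j ≠ k)
    (hwalk : ∀ m : ℕ, 1 ≤ m → ∀ v : ℕ → Fin n, v 0 = k → v m = j →
      (∀ t < m, 0 < P (v t) (v (t + 1))) → ∃ t ≤ m, v t = i)
    (τ : ℕ) (hτ : 1 ≤ τ) :
    (∑ t ∈ Finset.range τ, hitF P t k j ≤ ∑ t ∈ Finset.range (τ - 1), hitF P t i j) ∧
    (∑ t ∈ Finset.range τ, hitF P t k j ≤ ∑ t ∈ Finset.range τ, hitF P t i j) :=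
  stmt_7_general n P hP0 hP1 i j k hij hik hwalk τ
end

section
/- Let m ≥ 2 and let x₁,…,x_{m−1} be real numbers in [0,1]. Define the m×m matrices A and B by: A(1,2) = 1; A(k,k−1) = 1 − x_{k−1} for 2 ≤ k ≤ m; A(k,k+1) = x_{k−1} for 2 ≤ k ≤ m−1; all other entries of A are 0; and B is defined identically but with the parameter sequence reversed, i.e., B(1,2) = 1, B(k,k−1) = 1 − x_{m+1−k} for 2 ≤ k ≤ m, B(k,k+1) = x_{m+1−k} for 2 ≤ k ≤ m−1, all other entries 0. Then for every integer k ≥ 0, e₁ᵀ A^{k} 𝟙_m = e₁ᵀ B^{k} 𝟙_m, where e₁ is the first standard basis vector and 𝟙_m the all-ones vector. -/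
/-!
Both sequences `k ↦ e₁ᵀ A^k 𝟙` and `k ↦ e₁ᵀ B^k 𝟙` equal `1` for `k < m`: every row but the last
sums to `1`, and the last row cannot be reached from the first in fewer than `m - 1` steps.
They also satisfy one and the same linear recurrence of order `m`. With the `2 × 2` transfer
matrices `W(a) = [[a, X - 1], [a, X - a]]` over `ℝ[X]`, the polynomial
`Q = (1, X - 1) W(x₁) ⋯ W(x_{m-1}) (1, 1)ᵀ` is monic of degree `m`, and propagating `e₁ᵀ p(A)`
along the prefixes of the product shows `e₁ᵀ Q(A) = 0`, so `Q` annihilates the sequence.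
Finally `Q` is unchanged when the parameters are reversed: `W(a) S = S W(a)ᵀ` for the symmetric
matrix `S = [[2(X - 1), X - 1], [X - 1, X]]`, and `S (1, X - 1)ᵀ = (X² - 1) (1, 1)ᵀ`, so
transposing the product shows that `(X² - 1) Q` does not see the order of the factors.
-/

open Polynomial Matrix

noncomputable section

variable {R : Type*} [CommRing R]

namespace LinearRecurrence

/-- For monic `Q`, the linear recurrence whose characteristic polynomial is `Q`. -/
def ofPoly (Q : R[X]) : LinearRecurrence R :=
  ⟨Q.natDegree, fun i => -Q.coeff i⟩

theorem isSolution_ofPoly_dotProduct_pow_mulVec {n : Type*} [Fintype n] [DecidableEq n]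
    {M : Matrix n n R} {Q : R[X]} (hQ : Q.Monic) {u : n → R} (hu : u ᵥ* aeval M Q = 0)
    (w : n → R) : (ofPoly Q).IsSolution fun j => u ⬝ᵥ (M ^ j *ᵥ w) := by
  intro k
  have hterm : ∀ i, (u ᵥ* M ^ i) ⬝ᵥ (M ^ k *ᵥ w) = u ⬝ᵥ (M ^ (k + i) *ᵥ w) := fun i => by
    rw [← dotProduct_mulVec, Matrix.mulVec_mulVec, ← pow_add, add_comm]
  have hsum := congrArg (· ⬝ᵥ (M ^ k *ᵥ w)) hu
  simp only [aeval_eq_sum_range, Finset.sum_range_succ, hQ.coeff_natDegree, one_smul,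
    Matrix.vecMul_add, Matrix.vecMul_sum, Matrix.vecMul_smul, add_dotProduct, sum_dotProduct,
    smul_dotProduct, hterm, zero_dotProduct, smul_eq_mul] at hsum
  change u ⬝ᵥ (M ^ (k + Q.natDegree) *ᵥ w) =
    ∑ i : Fin Q.natDegree, -Q.coeff i * u ⬝ᵥ (M ^ (k + i) *ᵥ w)
  rw [Fin.sum_univ_eq_sum_range (fun i => -Q.coeff i * u ⬝ᵥ (M ^ (k + i) *ᵥ w))]
  simp only [neg_mul, Finset.sum_neg_distrib]
  exact eq_neg_of_add_eq_zero_right hsum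

end LinearRecurrence

namespace LineChain

def transferMatrix (a : R) : Matrix (Fin 2) (Fin 2) R[X] :=
  !![C a, X - 1; C a, X - C a]

def transferProd (l : List R) : Matrix (Fin 2) (Fin 2) R[X] :=
  (l.map transferMatrix).prod

def transferRow (l : List R) : Fin 2 → R[X] :=
  ![1, X - 1] ᵥ* transferProd l

def transferPoly (l : List R) : R[X] :=
  ![1, X - 1] ⬝ᵥ (transferProd l *ᵥ ![1, 1])

def symmetrizer : Matrix (Fin 2) (Fin 2) R[X] :=
  !![2 * (X - 1), X - 1; X - 1, X]

theorem transferProd_cons (a : R) (l : List R) :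
    transferProd (a :: l) = transferMatrix a * transferProd l := by
  simp [transferProd]

theorem transferRow_append_singleton (l : List R) (a : R) :
    transferRow (l ++ [a]) = transferRow l ᵥ* transferMatrix a := by
  simp [transferRow, transferProd, Matrix.vecMul_vecMul]

theorem transferPoly_eq_transferRow (l : List R) :
    transferPoly l = transferRow l 0 + transferRow l 1 := by
  rw [transferPoly, dotProduct_mulVec]
  simp [transferRow, dotProduct, Fin.sum_univ_two]

theorem symmetrizer_transpose : (symmetrizer : Matrix (Fin 2) (Fin 2) R[X])ᵀ = symmetrizer := by
  ext i j : 1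
  fin_cases i <;> fin_cases j <;> rfl

theorem transferMatrix_mul_symmetrizer (a : R) :
    transferMatrix a * symmetrizer = symmetrizer * (transferMatrix a)ᵀ := by
  ext i j : 1
  fin_cases i <;> fin_cases j <;>
    simp [transferMatrix, symmetrizer, Matrix.mul_apply, Fin.sum_univ_two] <;> ring

theorem symmetrizer_mulVec :
    symmetrizer *ᵥ ![1, X - 1] = (X ^ 2 - 1 : R[X]) • ![(1 : R[X]), 1] := by
  ext i : 1
  fin_cases i <;> simp [symmetrizer, Matrix.mulVec, dotProduct, Fin.sum_univ_two] <;> ring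

theorem transferProd_reverse_mul_symmetrizer (l : List R) :
    transferProd l.reverse * symmetrizer = symmetrizer * (transferProd l)ᵀ := by
  induction l with
  | nil => simp [transferProd]
  | cons a l ih =>
    simp only [transferProd, List.reverse_cons, List.map_append, List.prod_append,
      List.map_cons, List.prod_cons, List.map_nil, List.prod_nil, mul_one,
      Matrix.transpose_mul] at ih ⊢
    rw [Matrix.mul_assoc, transferMatrix_mul_symmetrizer, ← Matrix.mul_assoc, ih,
      Matrix.mul_assoc]

theorem transferPoly_reverse (l : List R) : transferPoly l.reverse = transferPoly l := by
  have hreg : IsLeftRegular (X ^ 2 - 1 : R[X]) := by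
    simpa using (monic_X_pow_sub_C (1 : R) two_ne_zero).isRegular.left
  refine hreg ?_
  simp only [transferPoly]
  calc (X ^ 2 - 1) * (![1, X - 1] ⬝ᵥ (transferProd l.reverse *ᵥ ![1, 1]))
      = ![1, X - 1] ⬝ᵥ ((transferProd l.reverse * symmetrizer) *ᵥ ![1, X - 1]) := by
        rw [← Matrix.mulVec_mulVec, symmetrizer_mulVec, Matrix.mulVec_smul, dotProduct_smul,
          smul_eq_mul]
    _ = (symmetrizer *ᵥ ![1, X - 1]) ⬝ᵥ (![1, X - 1] ᵥ* transferProd l) := by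
        rw [transferProd_reverse_mul_symmetrizer, ← Matrix.mulVec_mulVec, dotProduct_mulVec,
          Matrix.mulVec_transpose, ← Matrix.vecMul_transpose, symmetrizer_transpose]
    _ = (X ^ 2 - 1) * (![1, X - 1] ⬝ᵥ (transferProd l *ᵥ ![1, 1])) := by
        rw [symmetrizer_mulVec, smul_dotProduct, smul_eq_mul, dotProduct_comm,
          ← dotProduct_mulVec]

theorem transferMatrix_mulVec (a : R) (c : Fin 2 → R[X]) :
    transferMatrix a *ᵥ c = ![C a * c 0 + (X - 1) * c 1, C a * c 0 + (X - C a) * c 1] := by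
  ext i : 1
  fin_cases i <;> simp [transferMatrix, Matrix.mulVec, dotProduct, Fin.sum_univ_two]

theorem vecMul_transferMatrix (g : Fin 2 → R[X]) (a : R) :
    g ᵥ* transferMatrix a = ![C a * (g 0 + g 1), (g 0 + g 1) * X - g 0 - C a * g 1] := by
  ext i : 1
  fin_cases i <;> simp [transferMatrix, Matrix.vecMul, dotProduct, Fin.sum_univ_two] <;> ring

theorem natDegree_transferMatrix_mulVec [Nontrivial R] (a : R) {c : Fin 2 → R[X]} {n : ℕ}
    (h0 : (c 0).natDegree ≤ n) (h1 : (c 1).Monic) (h1deg : (c 1).natDegree = n) :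
    ((transferMatrix a *ᵥ c) 0).natDegree ≤ n + 1 ∧ ((transferMatrix a *ᵥ c) 1).Monic ∧
      ((transferMatrix a *ᵥ c) 1).natDegree = n + 1 := by
  have hmul : ((X - C a) * c 1).natDegree = n + 1 := by
    rw [(monic_X_sub_C a).natDegree_mul h1, natDegree_X_sub_C, h1deg, add_comm]
  have hlt : (C a * c 0).natDegree < ((X - C a) * c 1).natDegree :=
    hmul ▸ (natDegree_C_mul_le a _).trans_lt (by omega)
  have hX : (X - 1 : R[X]).natDegree ≤ 1 := by simpa using natDegree_X_sub_C_le (1 : R)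
  simp only [transferMatrix_mulVec, Matrix.cons_val_zero, Matrix.cons_val_one]
  refine ⟨?_, ((monic_X_sub_C a).mul h1).add_of_right (degree_lt_degree hlt), ?_⟩
  · exact natDegree_add_le_of_degree_le ((natDegree_C_mul_le a _).trans (by omega))
      (natDegree_mul_le.trans (by omega))
  · rw [natDegree_add_eq_right_of_natDegree_lt hlt, hmul]

theorem natDegree_transferProd_mulVec [Nontrivial R] (l : List R) :
    ((transferProd l *ᵥ ![1, 1]) 0).natDegree ≤ l.length ∧
      ((transferProd l *ᵥ ![1, 1]) 1).Monic ∧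
      ((transferProd l *ᵥ ![1, 1]) 1).natDegree = l.length := by
  induction l with
  | nil => simp [transferProd]
  | cons a l ih =>
    obtain ⟨h0, h1, h1deg⟩ := ih
    rw [transferProd_cons, ← Matrix.mulVec_mulVec]
    exact natDegree_transferMatrix_mulVec a h0 h1 h1deg

theorem transferPoly_eq_transferProd_cons_one (l : List R) :
    transferPoly l = (transferProd (1 :: l) *ᵥ ![1, 1]) 1 := by
  rw [transferProd_cons, ← Matrix.mulVec_mulVec, transferMatrix_mulVec, transferPoly]
  simp [dotProduct, Fin.sum_univ_two]

theorem transferPoly_monic [Nontrivial R] (l : List R) : (transferPoly l).Monic :=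
  transferPoly_eq_transferProd_cons_one l ▸ (natDegree_transferProd_mulVec (1 :: l)).2.1

theorem natDegree_transferPoly [Nontrivial R] (l : List R) :
    (transferPoly l).natDegree = l.length + 1 :=
  transferPoly_eq_transferProd_cons_one l ▸ (natDegree_transferProd_mulVec (1 :: l)).2.2

/-- The `j`-th standard basis vector of `Fin m → R`, read as `0` when `j ≥ m`; with this
convention the last row of `lineMatrix` obeys the same formula as the inner rows. -/
def natSingle (m j : ℕ) : Fin m → R := fun l => if l.val = j then 1 else 0

def lineMatrix (m : ℕ) (y : ℕ → R) : Matrix (Fin m) (Fin m) R :=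
  Matrix.of fun r l =>
    if r.val = 0 then (if l.val = 1 then 1 else 0)
    else if l.val + 1 = r.val then 1 - y r.val
    else if l.val = r.val + 1 then y r.val
    else 0

def lineParams {α : Type*} (m : ℕ) (y : ℕ → α) : List α :=
  (List.range (m - 1)).map fun i => y (i + 1)

def survivalSeq (m : ℕ) (y : ℕ → R) (k : ℕ) : R :=
  natSingle m 0 ⬝ᵥ (lineMatrix m y ^ k *ᵥ 1)

def firstRow {m : ℕ} (M : Matrix (Fin m) (Fin m) R) (p : R[X]) : Fin m → R :=
  natSingle m 0 ᵥ* aeval M p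

variable {m : ℕ}

theorem natSingle_of_le {j : ℕ} (h : m ≤ j) : (natSingle m j : Fin m → R) = 0 := by
  ext l
  exact if_neg (by omega)

theorem natSingle_dotProduct {j : ℕ} (h : j < m) (w : Fin m → R) :
    natSingle m j ⬝ᵥ w = w ⟨j, h⟩ := by
  have hsingle : (natSingle m j : Fin m → R) = Pi.single ⟨j, h⟩ 1 := by
    ext l
    simp [natSingle, Pi.single_apply, Fin.ext_iff]
  rw [hsingle, single_one_dotProduct]

theorem natSingle_vecMul {j : ℕ} (h : j < m) (M : Matrix (Fin m) (Fin m) R) :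
    natSingle m j ᵥ* M = M ⟨j, h⟩ :=
  funext fun _ => natSingle_dotProduct h _

theorem lineMatrix_row_of_eq_zero (y : ℕ → R) {r : Fin m} (hr : r.val = 0) :
    lineMatrix m y r = natSingle m 1 := by
  ext l
  simp [lineMatrix, natSingle, hr]

theorem lineMatrix_row_of_ne_zero (y : ℕ → R) {r : Fin m} (hr : r.val ≠ 0) :
    lineMatrix m y r = (1 - y r) • natSingle m (r - 1) + y r • natSingle m (r + 1) := by
  ext l
  simp only [lineMatrix, natSingle, Matrix.of_apply, Pi.add_apply, Pi.smul_apply, smul_eq_mul,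
    if_neg hr]
  split_ifs <;> first | (exfalso; omega) | ring

theorem natSingle_zero_vecMul_lineMatrix (hm : 0 < m) (y : ℕ → R) :
    natSingle m 0 ᵥ* lineMatrix m y = natSingle m 1 := by
  rw [natSingle_vecMul hm, lineMatrix_row_of_eq_zero y rfl]

theorem natSingle_vecMul_lineMatrix {j : ℕ} (hj : j ≠ 0) (h : j < m) (y : ℕ → R) :
    natSingle m j ᵥ* lineMatrix m y =
      (1 - y j) • natSingle m (j - 1) + y j • natSingle m (j + 1) := by
  rw [natSingle_vecMul h, lineMatrix_row_of_ne_zero y hj]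

theorem lineMatrix_mulVec_apply_eq_one (y : ℕ → R) {r : Fin m} (hr : r.val + 1 < m)
    {w : Fin m → R} (hw : ∀ l : Fin m, l.val ≤ r.val + 1 → w l = 1) :
    (lineMatrix m y *ᵥ w) r = 1 := by
  by_cases h0 : r.val = 0
  · rw [Matrix.mulVec, lineMatrix_row_of_eq_zero y h0, natSingle_dotProduct (by omega),
      hw _ (by simp [h0])]
  · rw [Matrix.mulVec, lineMatrix_row_of_ne_zero y h0, add_dotProduct, smul_dotProduct,
      smul_dotProduct, natSingle_dotProduct (by omega), natSingle_dotProduct hr,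
      hw ⟨r - 1, _⟩ (by dsimp only; omega), hw _ le_rfl]
    simp

theorem lineMatrix_pow_mulVec_one_apply (y : ℕ → R) (k : ℕ) {r : Fin m} (h : r.val + k < m) :
    (lineMatrix m y ^ k *ᵥ 1) r = 1 := by
  induction k generalizing r with
  | zero => simp
  | succ k ih =>
    rw [pow_succ', ← Matrix.mulVec_mulVec]
    exact lineMatrix_mulVec_apply_eq_one y (by omega) fun l hl => ih (by omega)

section firstRow

variable (M : Matrix (Fin m) (Fin m) R)

theorem firstRow_sub (p q : R[X]) : firstRow M (p - q) = firstRow M p - firstRow M q := by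
  simp [firstRow, Matrix.vecMul_sub]

theorem firstRow_C_mul (a : R) (p : R[X]) : firstRow M (C a * p) = a • firstRow M p := by
  simp [firstRow, C_mul', Matrix.vecMul_smul]

theorem firstRow_mul_X (p : R[X]) : firstRow M (p * X) = firstRow M p ᵥ* M := by
  simp [firstRow, Matrix.vecMul_vecMul]

end firstRow

theorem firstRow_lineMatrix_vecMul_transferMatrix (y : ℕ → R) {k : ℕ} (hk : k + 1 < m)
    {g : Fin 2 → R[X]} {c : R}
    (h0 : firstRow (lineMatrix m y) (g 0) = c • natSingle m k)
    (h1 : firstRow (lineMatrix m y) (g 0 + g 1) = c • natSingle m (k + 1)) :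
    firstRow (lineMatrix m y) ((g ᵥ* transferMatrix (y (k + 1))) 0) =
        (y (k + 1) * c) • natSingle m (k + 1) ∧
      firstRow (lineMatrix m y) ((g ᵥ* transferMatrix (y (k + 1))) 0 +
        (g ᵥ* transferMatrix (y (k + 1))) 1) = (y (k + 1) * c) • natSingle m (k + 2) := by
  set a := y (k + 1)
  have hsum : (g ᵥ* transferMatrix a) 0 + (g ᵥ* transferMatrix a) 1 =
      (g 0 + g 1) * X - C (1 - a) * g 0 := by
    simp only [vecMul_transferMatrix, Matrix.cons_val_zero, Matrix.cons_val_one, map_sub,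
      map_one]
    ring
  constructor
  · rw [vecMul_transferMatrix, Matrix.cons_val_zero, firstRow_C_mul, h1, smul_smul]
  · rw [hsum, firstRow_sub, firstRow_mul_X, firstRow_C_mul, h1, h0, Matrix.smul_vecMul,
      natSingle_vecMul_lineMatrix (by omega) hk]
    simp only [a, Nat.add_sub_cancel]
    module

theorem exists_firstRow_lineMatrix_transferRow (y : ℕ → R) {k : ℕ} (hk : k < m) :
    ∃ c : R,
      firstRow (lineMatrix m y) (transferRow ((List.range k).map fun i => y (i + 1)) 0) =
        c • natSingle m k ∧
      firstRow (lineMatrix m y) (transferRow ((List.range k).map fun i => y (i + 1)) 0 +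
          transferRow ((List.range k).map fun i => y (i + 1)) 1) =
        c • natSingle m (k + 1) := by
  induction k with
  | zero =>
    refine ⟨1, ?_, ?_⟩
    · simp [transferRow, transferProd, firstRow]
    · simp [transferRow, transferProd, firstRow, natSingle_zero_vecMul_lineMatrix hk]
  | succ k ih =>
    obtain ⟨c, h0, h1⟩ := ih (by omega)
    rw [List.range_succ, List.map_append, List.map_singleton, transferRow_append_singleton]
    exact ⟨_, firstRow_lineMatrix_vecMul_transferMatrix y hk h0 h1⟩

theorem firstRow_lineMatrix_transferPoly (hm : 0 < m) (y : ℕ → R) :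
    firstRow (lineMatrix m y) (transferPoly (lineParams m y)) = 0 := by
  obtain ⟨c, -, h⟩ := exists_firstRow_lineMatrix_transferRow (m := m) y (k := m - 1) (by omega)
  rw [lineParams, transferPoly_eq_transferRow, h, Nat.sub_add_cancel hm, natSingle_of_le le_rfl,
    smul_zero]

theorem lineParams_reverse {α : Type*} (y : ℕ → α) :
    lineParams m (fun r => y (m - r)) = (lineParams m y).reverse := by
  rw [lineParams, lineParams, ← List.map_reverse, List.range_eq_range', List.reverse_range',
    List.map_map, ← List.range_eq_range']
  refine List.map_congr_left fun i hi => ?_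
  simp only [Function.comp_apply, List.mem_range] at hi ⊢
  congr 1
  omega

theorem survivalSeq_eq_sum (hm : 0 < m) (y : ℕ → R) (k : ℕ) :
    survivalSeq m y k = ∑ j, (lineMatrix m y ^ k) ⟨0, hm⟩ j := by
  rw [survivalSeq, natSingle_dotProduct hm]
  simp [Matrix.mulVec, dotProduct]

theorem survivalSeq_of_lt (y : ℕ → R) {k : ℕ} (hk : k < m) : survivalSeq m y k = 1 := by
  rw [survivalSeq, natSingle_dotProduct (by omega)]
  exact lineMatrix_pow_mulVec_one_apply y k (by simpa using hk)

theorem survivalSeq_isSolution [Nontrivial R] (hm : 0 < m) (y : ℕ → R) :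
    (LinearRecurrence.ofPoly (transferPoly (lineParams m y))).IsSolution (survivalSeq m y) :=
  LinearRecurrence.isSolution_ofPoly_dotProduct_pow_mulVec (transferPoly_monic _)
    (firstRow_lineMatrix_transferPoly hm y) 1

theorem survivalSeq_reverse [Nontrivial R] (hm : 0 < m) (y : ℕ → R) :
    survivalSeq m (fun r => y (m - r)) = survivalSeq m y := by
  have hsol := survivalSeq_isSolution hm (fun r => y (m - r))
  rw [lineParams_reverse, transferPoly_reverse] at hsol
  have horder : (LinearRecurrence.ofPoly (transferPoly (lineParams m y))).order = m := by
    simp only [LinearRecurrence.ofPoly, natDegree_transferPoly, lineParams, List.length_map,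
      List.length_range]
    omega
  refine (LinearRecurrence.eq_iff_eqOn_range_order _ _ _ hsol (survivalSeq_isSolution hm y)).2
    fun k hk => ?_
  rw [Finset.coe_range, horder, Set.mem_Iio] at hk
  rw [survivalSeq_of_lt _ hk, survivalSeq_of_lt _ hk]

end LineChain

end

/-- Symmetry of the line-graph capture probabilities: for the tridiagonal substochastic
matrices `A` (parameters `x₁, …, x_{m-1} ∈ [0,1]`) and `B` (the reversed parameters),
one has `e₁ᵀ A^k 𝟙 = e₁ᵀ B^k 𝟙` for every `k ≥ 0`. (Rows indexed `0, …, m-1`;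
1-indexed row `k` corresponds to index `k - 1`.) -/
theorem stmt_18 (m : ℕ) (hm : 2 ≤ m) (x : ℕ → ℝ)
    (A B : Matrix (Fin m) (Fin m) ℝ)
    (hA : ∀ r l : Fin m, A r l =
      if r.val = 0 then (if l.val = 1 then 1 else 0)
      else if l.val + 1 = r.val then 1 - x r.val
      else if l.val = r.val + 1 then x r.val
      else 0)
    (hB : ∀ r l : Fin m, B r l =
      if r.val = 0 then (if l.val = 1 then 1 else 0)
      else if l.val + 1 = r.val then 1 - x (m - r.val)
      else if l.val = r.val + 1 then x (m - r.val)
      else 0)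
    (k : ℕ) :
    ∑ j, (A ^ k) ⟨0, by omega⟩ j = ∑ j, (B ^ k) ⟨0, by omega⟩ j := by
  obtain rfl : A = LineChain.lineMatrix m x := Matrix.ext hA
  obtain rfl : B = LineChain.lineMatrix m (fun r => x (m - r)) := Matrix.ext hB
  rw [← LineChain.survivalSeq_eq_sum, ← LineChain.survivalSeq_eq_sum,
    LineChain.survivalSeq_reverse (by omega)]
end

section
/- Let m ≥ 2 and let x₁,…,x_{m−1} be real numbers. Define the m×m matrices A and B by: A(1,2) = 1; A(k,k−1) = 1 − x_{k−1} for 2 ≤ k ≤ m; A(k,k+1) = x_{k−1} for 2 ≤ k ≤ m−1; all other entries of A are 0; and B(1,2) = 1, B(k,k−1) = 1 − x_{m+1−k} for 2 ≤ k ≤ m, B(k,k+1) = x_{m+1−k} for 2 ≤ k ≤ m−1, all other entries 0. Then A and B have the same characteristic polynomial: det(λI_m − A) = det(λI_m − B) as polynomials in λ. -/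
/-!
The characteristic polynomials `p k` of the leading `k × k` blocks of a birth–death matrix with
up-probabilities `z` satisfy `p (k + 2) = X * p (k + 1) - z k * (1 - z (k + 1)) * p k`, where each
edge weight splits into one factor per site. So the vector `(p (k + 1), z k * p k)` is propagated
by the `2 × 2` transfer matrices `T t = !![X, -(1 - t); t, 0]`, one per site, and all of them are
self-adjoint for the single symmetric form `Q = !![X, -1; -1, X]`. Reversing the order of the
sites therefore turns the transfer product into its `Q`-adjoint. Pairing with the initial vector
`(X, 1)`, for which `Q (X, 1) = (X² - 1, 0)`, gives `(X² - 1) * p m` for both orders, and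
`X² - 1` is monic, hence cancellable.
-/

open Matrix Fin Polynomial

theorem Matrix.det_succ_succ_of_last_row_col_eq_zero {R : Type*} [CommRing R] {n : ℕ}
    (M : Matrix (Fin (n + 2)) (Fin (n + 2)) R)
    (hrow : ∀ j : Fin n, M (last (n + 1)) j.castSucc.castSucc = 0)
    (hcol : ∀ i : Fin n, M i.castSucc.castSucc (last (n + 1)) = 0) :
    M.det = M (last (n + 1)) (last (n + 1)) * (M.submatrix castSucc castSucc).det
      - M (last (n + 1)) (last n).castSucc * M (last n).castSucc (last (n + 1))
        * ((M.submatrix castSucc castSucc).submatrix castSucc castSucc).det := by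
  have hlast : (last n).castSucc.succAbove (last n) = last (n + 1) := by
    rw [succAbove_of_le_castSucc _ _ le_rfl, succ_last]
  have hminor : (M.submatrix castSucc (last n).castSucc.succAbove).det =
      M (last n).castSucc (last (n + 1))
        * ((M.submatrix castSucc castSucc).submatrix castSucc castSucc).det := by
    have hc : (last n).castSucc.succAbove ∘ castSucc = castSucc ∘ (castSucc : Fin n → _) :=
      funext fun j => succAbove_castSucc_of_lt _ _ (castSucc_lt_last j)
    rw [det_succ_column _ (last n), sum_univ_castSucc, Finset.sum_eq_zero, zero_add]
    · simp only [submatrix_apply, submatrix_submatrix, succAbove_last, hc, hlast, val_last,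
        ← two_mul, (even_two_mul n).neg_one_pow, one_mul]
    · intro i _
      simp [hlast, hcol]
  rw [det_succ_row M (last (n + 1)), sum_univ_castSucc, sum_univ_castSucc, Finset.sum_eq_zero,
    zero_add]
  · simp only [succAbove_last, hminor, val_castSucc, val_last]
    rw [(Odd.neg_one_pow ⟨n, by ring⟩ : (-1 : R) ^ (n + 1 + n) = -1), ← two_mul,
      (even_two_mul _).neg_one_pow]
    ring
  · intro j _
    simp [hrow]

theorem Matrix.charmatrix_submatrix {R m n : Type*} [CommRing R] [Fintype m] [Fintype n]
    [DecidableEq m] [DecidableEq n] (M : Matrix n n R) {e : m → n} (he : Function.Injective e) :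
    (M.submatrix e e).charmatrix = M.charmatrix.submatrix e e := by
  ext i j
  simp [charmatrix_apply, diagonal_apply, he.eq_iff]

theorem Matrix.dotProduct_mulVec_eq_of_transpose_mul_eq {m S : Type*} [Fintype m]
    [CommSemiring S] {P P' Q : Matrix m m S} (hQ : Q.IsSymm) (h : Pᵀ * Q = Q * P')
    (v w : m → S) :
    (Q *ᵥ v) ⬝ᵥ (P *ᵥ w) = (Q *ᵥ w) ⬝ᵥ (P' *ᵥ v) := by
  rw [dotProduct_mulVec, ← mulVec_transpose, mulVec_mulVec, h, ← mulVec_mulVec, dotProduct_comm,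
    dotProduct_mulVec, ← mulVec_transpose, hQ.eq]

noncomputable section

variable {R : Type*} [CommRing R]

/-- The transition matrix of the birth–death chain on `ℕ` that steps from `r` up with
probability `z r` and down with probability `1 - z r`, restricted to the states `0, …, n - 1`. -/
def birthDeathMatrix (z : ℕ → R) (n : ℕ) : Matrix (Fin n) (Fin n) R :=
  of fun r l => if (l : ℕ) + 1 = r then 1 - z r else if (l : ℕ) = r + 1 then z r else 0

section Charpoly

variable (z : ℕ → R)

@[simp]
theorem birthDeathMatrix_submatrix_castSucc (n : ℕ) :
    (birthDeathMatrix z (n + 1)).submatrix castSucc castSucc = birthDeathMatrix z n := by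
  ext
  simp [birthDeathMatrix]

theorem charpoly_birthDeathMatrix_one : (birthDeathMatrix z 1).charpoly = X := by
  simp [charpoly, birthDeathMatrix]

theorem charpoly_birthDeathMatrix_succ_succ (n : ℕ) :
    (birthDeathMatrix z (n + 2)).charpoly = X * (birthDeathMatrix z (n + 1)).charpoly
      - C (z n * (1 - z (n + 1))) * (birthDeathMatrix z n).charpoly := by
  have hne {i j : Fin (n + 2)} (h : (i : ℕ) ≠ j) : (birthDeathMatrix z (n + 2)).charmatrix i j =
      -C (birthDeathMatrix z (n + 2) i j) :=
    charmatrix_apply_ne _ _ _ (Fin.ne_of_val_ne h)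
  have hdiag : (birthDeathMatrix z (n + 2)).charmatrix (last (n + 1)) (last (n + 1)) = X := by
    simp [charmatrix_apply_eq, birthDeathMatrix]
  have hsub : (birthDeathMatrix z (n + 2)).charmatrix (last (n + 1)) (last n).castSucc =
      -C (1 - z (n + 1)) := by
    rw [hne (by simp)]
    simp [birthDeathMatrix]
  have hsuper : (birthDeathMatrix z (n + 2)).charmatrix (last n).castSucc (last (n + 1)) =
      -C (z n) := by
    rw [hne (by simp)]
    simp only [birthDeathMatrix, of_apply, val_last, val_castSucc]
    rw [if_neg (by omega), if_true]
  rw [charpoly, det_succ_succ_of_last_row_col_eq_zero]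
  · simp only [← charmatrix_submatrix _ (castSucc_injective _),
      birthDeathMatrix_submatrix_castSucc, hdiag, hsub, hsuper, charpoly, map_mul]
    ring
  · intro j
    rw [hne (by simp; omega)]
    simp only [birthDeathMatrix, of_apply, val_last, val_castSucc]
    rw [if_neg (by omega), if_neg (by omega), map_zero, neg_zero]
  · intro i
    rw [hne (by simp; omega)]
    simp only [birthDeathMatrix, of_apply, val_last, val_castSucc]
    rw [if_neg (by omega), if_neg (by omega), map_zero, neg_zero]

theorem birthDeathMatrix_update_zero_apply (n : ℕ) (r l : Fin n) :
    birthDeathMatrix (Function.update z 0 1) n r l =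
      if r.val = 0 then (if l.val = 1 then 1 else 0)
      else if l.val + 1 = r.val then 1 - z r.val
      else if l.val = r.val + 1 then z r.val
      else 0 := by
  by_cases hr : r.val = 0 <;> simp [birthDeathMatrix, hr]

end Charpoly

namespace BirthDeath

def transfer (t : R) : Matrix (Fin 2) (Fin 2) R[X] := !![X, -C (1 - t); C t, 0]

def form : Matrix (Fin 2) (Fin 2) R[X] := !![X, -1; -1, X]

theorem form_isSymm : (form : Matrix (Fin 2) (Fin 2) R[X]).IsSymm :=
  IsSymm.ext fun i j => by fin_cases i <;> fin_cases j <;> rfl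

theorem transfer_transpose_mul_form (t : R) :
    (transfer t)ᵀ * form = form * transfer t := by
  refine Matrix.ext fun i j => ?_
  fin_cases i <;> fin_cases j <;> simp [transfer, form, mul_apply] <;> ring

def transferProd (z : ℕ → R) : ℕ → Matrix (Fin 2) (Fin 2) R[X]
  | 0 => 1
  | n + 1 => transfer (z (n + 1)) * transferProd z n

theorem transferProd_succ' (z : ℕ → R) (n : ℕ) :
    transferProd z (n + 1) = transferProd (fun k => z (k + 1)) n * transfer (z 1) := by
  induction n with
  | zero => simp [transferProd]
  | succ n ih => rw [transferProd, ih, transferProd, Matrix.mul_assoc]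

theorem transferProd_congr {z w : ℕ → R} {n : ℕ} (h : ∀ k, 1 ≤ k → k ≤ n → z k = w k) :
    transferProd z n = transferProd w n := by
  induction n with
  | zero => rfl
  | succ n ih =>
    rw [transferProd, transferProd, h (n + 1) (by omega) le_rfl,
      ih fun k hk1 hkn => h k hk1 (by omega)]

theorem transferProd_transpose_mul_form (z : ℕ → R) (n : ℕ) :
    (transferProd z n)ᵀ * form = form * transferProd (fun k => z (n + 1 - k)) n := by
  induction n generalizing z with
  | zero => simp [transferProd]
  | succ n ih =>
    rw [transferProd, transpose_mul, Matrix.mul_assoc, transfer_transpose_mul_form,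
      ← Matrix.mul_assoc, ih, Matrix.mul_assoc, transferProd_succ']
    simp only [Nat.add_sub_add_right, Nat.add_sub_cancel]

theorem transferProd_mulVec {z : ℕ → R} (hz : z 0 = 1) (n : ℕ) :
    transferProd z n *ᵥ ![X, 1] =
      ![(birthDeathMatrix z (n + 1)).charpoly, C (z n) * (birthDeathMatrix z n).charpoly] := by
  induction n with
  | zero => simp [transferProd, charpoly_birthDeathMatrix_one, hz]
  | succ n ih =>
    rw [transferProd, ← mulVec_mulVec, ih, charpoly_birthDeathMatrix_succ_succ]
    funext i
    fin_cases i
    · simp [transfer, mulVec, dotProduct]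
      ring
    · simp [transfer, mulVec, dotProduct]

theorem transferProd_mulVec_zero_reflect (z : ℕ → R) (n : ℕ) :
    (transferProd z n *ᵥ ![X, 1]) 0 = (transferProd (fun k => z (n + 1 - k)) n *ᵥ ![X, 1]) 0 := by
  have key := dotProduct_mulVec_eq_of_transpose_mul_eq form_isSymm
    (transferProd_transpose_mul_form z n) ![X, 1] ![X, 1]
  have hform : form *ᵥ ![(X : R[X]), 1] = ![X ^ 2 - C 1, 0] := by
    funext i
    fin_cases i
    · simp [form, mulVec, dotProduct]
      ring
    · simp [form, mulVec, dotProduct]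
  simp only [hform, dotProduct, Fin.sum_univ_two, cons_val_zero, cons_val_one, zero_mul,
    add_zero] at key
  exact (monic_X_pow_sub_C (1 : R) two_ne_zero).isRegular.left key

end BirthDeath

open BirthDeath in
theorem charpoly_birthDeathMatrix_eq_of_reflect {z w : ℕ → R} {n : ℕ} (hz : z 0 = 1)
    (hw : w 0 = 1) (hzw : ∀ k, 1 ≤ k → k ≤ n → w k = z (n + 1 - k)) :
    (birthDeathMatrix z (n + 1)).charpoly = (birthDeathMatrix w (n + 1)).charpoly := by
  have hz' := congrFun (transferProd_mulVec hz n) 0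
  have hw' := congrFun (transferProd_mulVec hw n) 0
  simp only [cons_val_zero] at hz' hw'
  rw [← hz', ← hw', transferProd_mulVec_zero_reflect, transferProd_congr]
  exact fun k hk1 hkn => (hzw k hk1 hkn).symm

end

theorem stmt_19_general (m : ℕ) (x : ℕ → ℝ)
    (A B : Matrix (Fin m) (Fin m) ℝ)
    (hA : ∀ r l : Fin m, A r l =
      if r.val = 0 then (if l.val = 1 then 1 else 0)
      else if l.val + 1 = r.val then 1 - x r.val
      else if l.val = r.val + 1 then x r.val
      else 0)
    (hB : ∀ r l : Fin m, B r l =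
      if r.val = 0 then (if l.val = 1 then 1 else 0)
      else if l.val + 1 = r.val then 1 - x (m - r.val)
      else if l.val = r.val + 1 then x (m - r.val)
      else 0) :
    A.charpoly = B.charpoly := by
  obtain _ | n := m
  · exact congrArg charpoly (Subsingleton.elim A B)
  have hA' : A = birthDeathMatrix (Function.update x 0 1) (n + 1) :=
    Matrix.ext fun r l => by rw [hA, birthDeathMatrix_update_zero_apply]
  have hB' : B = birthDeathMatrix (Function.update (fun k => x (n + 1 - k)) 0 1) (n + 1) :=
    Matrix.ext fun r l => by rw [hB, birthDeathMatrix_update_zero_apply]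
  rw [hA', hB']
  refine charpoly_birthDeathMatrix_eq_of_reflect (by simp) (by simp) fun k hk1 hkn => ?_
  rw [Function.update_of_ne (by omega), Function.update_of_ne (by omega)]

/-- The tridiagonal matrices `A` (parameters `x₁, …, x_{m-1}`) and `B` (the reversed
parameter sequence) have the same characteristic polynomial. (Rows indexed
`0, …, m-1`; 1-indexed row `k` corresponds to index `k - 1`.) -/
theorem stmt_19 (m : ℕ) (hm : 2 ≤ m) (x : ℕ → ℝ)
    (A B : Matrix (Fin m) (Fin m) ℝ)
    (hA : ∀ r l : Fin m, A r l =
      if r.val = 0 then (if l.val = 1 then 1 else 0)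
      else if l.val + 1 = r.val then 1 - x r.val
      else if l.val = r.val + 1 then x r.val
      else 0)
    (hB : ∀ r l : Fin m, B r l =
      if r.val = 0 then (if l.val = 1 then 1 else 0)
      else if l.val + 1 = r.val then 1 - x (m - r.val)
      else if l.val = r.val + 1 then x (m - r.val)
      else 0) :
    A.charpoly = B.charpoly :=
  stmt_19_general m x A B hA hB
end
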